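/- arXiv:2003.09203 — 3 statements merged into one kernel-verified Lean document; each statement's English description precedes it below -/
import Mathlib

section
/- Let G be a simple graph on a finite vertex type which is a tree (connected and acyclic), let w be an integer-valued function on the vertices with total sum 0, and let f be the unique function on ordered pairs of vertices with f(u,v) = -f(v,u), f(u,v) = 0 for non-adjacent u,v, and, for every vertex v, sum over u of f(v,u) equal to w(v). Then for every edge {u,v} of G, the value f(u,v) equals the sum of w over the vertex set of the connected component containing u in the graph obtained from G by deleting the edge {u,v}. -/
/-!
Let `S` be the component of `u` in `G` with the edge `uv` deleted. Summing the balance condition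
over `S`, the flows along edges inside `S` cancel by antisymmetry, so `∑ x ∈ S, w x` is the total
flow leaving `S`. Since a tree edge is a bridge, `uv` is the only edge of `G` leaving `S`, so that
total flow is `f u v`.
-/

namespace Finset

variable {ι M : Type*} [AddCommGroup M]

theorem sum_sum_eq_zero_of_antisymm [IsAddTorsionFree M] (s : Finset ι) {f : ι → ι → M}
    (hf : ∀ x y, f x y = -f y x) : ∑ x ∈ s, ∑ y ∈ s, f x y = 0 := by
  refine self_eq_neg.mp ?_
  calc ∑ x ∈ s, ∑ y ∈ s, f x y = ∑ y ∈ s, ∑ x ∈ s, -f y x :=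
        sum_comm.trans <| sum_congr rfl fun y _ => sum_congr rfl fun x _ => hf x y
    _ = -∑ x ∈ s, ∑ y ∈ s, f x y := by simp only [sum_neg_distrib]

theorem sum_sum_eq_sum_sum_compl_of_antisymm [IsAddTorsionFree M] [Fintype ι] [DecidableEq ι]
    (s : Finset ι) {f : ι → ι → M} (hf : ∀ x y, f x y = -f y x) :
    ∑ x ∈ s, ∑ y, f x y = ∑ x ∈ s, ∑ y ∈ sᶜ, f x y := by
  calc ∑ x ∈ s, ∑ y, f x y = ∑ x ∈ s, (∑ y ∈ s, f x y + ∑ y ∈ sᶜ, f x y) :=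
        sum_congr rfl fun x _ => (sum_add_sum_compl s (f x)).symm
    _ = ∑ x ∈ s, ∑ y ∈ sᶜ, f x y := by
        rw [sum_add_distrib, sum_sum_eq_zero_of_antisymm s hf, zero_add]

end Finset

namespace SimpleGraph

variable {V : Type*} {G : SimpleGraph V} {u v x y : V}

theorem eq_of_adj_of_reachable_deleteEdges_of_isBridge (hb : G.IsBridge s(u, v))
    (hxy : G.Adj x y) (hx : (G.deleteEdges {s(u, v)}).Reachable u x)
    (hy : ¬ (G.deleteEdges {s(u, v)}).Reachable u y) : x = u ∧ y = v := by
  by_cases he : s(x, y) = s(u, v)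
  · rcases Sym2.eq_iff.mp he with h | ⟨rfl, rfl⟩
    · exact h
    · exact absurd hx (isBridge_iff.mp hb)
  · have hxy' : (G.deleteEdges {s(u, v)}).Adj x y := (deleteEdges_adj ..).mpr ⟨hxy, he⟩
    exact absurd (hx.trans hxy'.reachable) hy

theorem sum_sum_compl_reachable_deleteEdges_of_isBridge {M : Type*} [AddCommMonoid M]
    [Fintype V] [DecidableEq V] (hb : G.IsBridge s(u, v)) {f : V → V → M}
    (hf : ∀ x y, ¬ G.Adj x y → f x y = 0) {S : Finset V}
    (hS : ∀ x, x ∈ S ↔ (G.deleteEdges {s(u, v)}).Reachable u x) :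
    ∑ x ∈ S, ∑ y ∈ Sᶜ, f x y = f u v := by
  have hu : u ∈ S := (hS u).mpr .rfl
  have hv : v ∈ Sᶜ := Finset.mem_compl.mpr fun h => isBridge_iff.mp hb ((hS v).mp h)
  rw [← Finset.sum_product', Finset.sum_eq_single_of_mem (u, v) (Finset.mem_product.mpr ⟨hu, hv⟩)]
  rintro ⟨x, y⟩ hxy hne
  obtain ⟨hx, hy⟩ := Finset.mem_product.mp hxy
  by_cases hadj : G.Adj x y
  · obtain ⟨rfl, rfl⟩ := eq_of_adj_of_reachable_deleteEdges_of_isBridge hb hadj ((hS x).mp hx)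
      (mt (hS y).mpr (Finset.mem_compl.mp hy))
    exact absurd rfl hne
  · exact hf x y hadj

end SimpleGraph

open Classical in
theorem stmt5_general {V : Type*} [Fintype V] (G : SimpleGraph V) (hG : G.IsTree)
    (w : V → ℤ) (f : V → V → ℤ)
    (hskew : ∀ u v : V, f u v = - f v u)
    (hsupp : ∀ u v : V, ¬ G.Adj u v → f u v = 0)
    (hbal : ∀ v : V, ∑ u : V, f v u = w v) :
    ∀ u v : V, G.Adj u v →
      f u v = ∑ x ∈ Finset.univ.filter
        (fun x : V => (G.deleteEdges {s(u, v)}).Reachable u x), w x := by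
  intro u v huv
  set S := Finset.univ.filter fun x : V => (G.deleteEdges {s(u, v)}).Reachable u x
  have hb : G.IsBridge s(u, v) := SimpleGraph.isAcyclic_iff_forall_adj_isBridge.mp hG.isAcyclic huv
  calc f u v = ∑ x ∈ S, ∑ y ∈ Sᶜ, f x y :=
        (SimpleGraph.sum_sum_compl_reachable_deleteEdges_of_isBridge hb hsupp (by simp [S])).symm
    _ = ∑ x ∈ S, ∑ y, f x y := (S.sum_sum_eq_sum_sum_compl_of_antisymm hskew).symm
    _ = ∑ x ∈ S, w x := by simp only [hbal]

open Classical in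
theorem stmt5 {V : Type*} [Fintype V] (G : SimpleGraph V) (hG : G.IsTree)
    (w : V → ℤ) (hw : ∑ v : V, w v = 0) (f : V → V → ℤ)
    (hskew : ∀ u v : V, f u v = - f v u)
    (hsupp : ∀ u v : V, ¬ G.Adj u v → f u v = 0)
    (hbal : ∀ v : V, ∑ u : V, f v u = w v) :
    ∀ u v : V, G.Adj u v →
      f u v = ∑ x ∈ Finset.univ.filter
        (fun x : V => (G.deleteEdges {s(u, v)}).Reachable u x), w x :=
  stmt5_general G hG w f hskew hsupp hbal
end

section
/- For every integer g ≥ 1 and every k ∈ ZMod g, the permutation of the sum type (ZMod g) ⊕ (ZMod g) defined by inl i ↦ inl (k - i) and inr i ↦ inr (k - 1 - i) has sign (-1)^(g-1). In particular, this permutation is odd when g is even and even when g is odd. -/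
theorem Equiv.subLeft_mul_subLeft {G : Type*} [AddCommGroup G] (a b : G) :
    Equiv.subLeft a * Equiv.subLeft b = Equiv.addRight (a - b) :=
  Equiv.ext fun x => by simp only [Equiv.Perm.mul_apply, Equiv.subLeft_apply,
    Equiv.coe_addRight]; abel

/-- `ZMod (n + 1)` is `Fin (n + 1)`, on which adding `1` is the `(n + 1)`-cycle `finRotate`. -/
theorem ZMod.sign_addRight_one (g : ℕ) [NeZero g] :
    Equiv.Perm.sign (Equiv.addRight (1 : ZMod g)) = (-1) ^ (g - 1) := by
  obtain ⟨n, rfl⟩ : ∃ n, g = n + 1 := Nat.exists_eq_succ_of_ne_zero (NeZero.ne g)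
  have hrot : Equiv.addRight (1 : ZMod (n + 1)) = finRotate (n + 1) :=
    Equiv.ext fun x => (finRotate_apply x).symm
  rw [hrot]
  exact sign_finRotate (n + 1)

theorem stmt9 (g : ℕ) (hg : 1 ≤ g) :
    haveI : NeZero g := ⟨by omega⟩
    ∀ k : ZMod g,
      Equiv.Perm.sign
        (Equiv.sumCongr (Equiv.subLeft k) (Equiv.subLeft (k - 1)) :
          Equiv.Perm (ZMod g ⊕ ZMod g)) = (-1 : ℤˣ) ^ (g - 1) := by
  have : NeZero g := ⟨by omega⟩
  intro k
  rw [Equiv.Perm.sign_sumCongr, ← map_mul, Equiv.subLeft_mul_subLeft, sub_sub_cancel,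
    ZMod.sign_addRight_one]
end

section
/- Let g ≥ 3 be an odd integer. Then every permutation of the sum type (ZMod g) ⊕ (ZMod g) which is of one of the following two forms has sign 1: (i) inl i ↦ inl (i + k), inr i ↦ inr (i + k) for some k ∈ ZMod g; (ii) inl i ↦ inl (k - i), inr i ↦ inr (k - 1 - i) for some k ∈ ZMod g. -/
/-!
A translation `τ : x ↦ x + k` of a finite group of odd order `n` satisfies `τⁿ = 1`, so its sign
`ε ∈ {±1}` satisfies `ε = εⁿ = 1`. Any two reflections `x ↦ a - x` and `x ↦ b - x` differ by a
translation, so they have the same sign `ε`, and the permutation in (ii) has sign `ε * ε = 1`.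
-/

open Equiv.Perm

lemma Equiv.subLeft_eq_addLeft_mul_subLeft {G : Type*} [AddGroup G] (a b : G) :
    Equiv.subLeft a = Equiv.addLeft (a - b) * Equiv.subLeft b := by
  ext x
  simp [← add_sub_assoc]

namespace Equiv.Perm

lemma sign_eq_one_of_pow_odd {α : Type*} [Fintype α] [DecidableEq α] {σ : Perm α} {n : ℕ}
    (hn : Odd n) (hσ : σ ^ n = 1) : sign σ = 1 := by
  rw [← pow_one (sign σ), ← Nat.odd_iff.mp hn, ← Int.units_pow_eq_pow_mod_two, ← map_pow, hσ,
    map_one]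

variable {G : Type*} [AddGroup G] [Fintype G] [DecidableEq G]

lemma sign_addRight_of_odd_card (h : Odd (Fintype.card G)) (k : G) :
    sign (Equiv.addRight k) = 1 :=
  sign_eq_one_of_pow_odd h (by rw [Equiv.nsmul_addRight, card_nsmul_eq_zero, Equiv.addRight_zero])

lemma sign_addLeft_of_odd_card (h : Odd (Fintype.card G)) (k : G) :
    sign (Equiv.addLeft k) = 1 :=
  sign_eq_one_of_pow_odd h (by rw [Equiv.nsmul_addLeft, card_nsmul_eq_zero, Equiv.addLeft_zero])

lemma sign_subLeft_of_odd_card (h : Odd (Fintype.card G)) (a b : G) :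
    sign (Equiv.subLeft a) = sign (Equiv.subLeft b) := by
  rw [Equiv.subLeft_eq_addLeft_mul_subLeft a b, map_mul, sign_addLeft_of_odd_card h, one_mul]

end Equiv.Perm

theorem stmt10 (g : ℕ) (hg : 3 ≤ g) (hodd : Odd g) :
    haveI : NeZero g := ⟨by omega⟩
    ∀ σ : Equiv.Perm (ZMod g ⊕ ZMod g),
      ((∃ k : ZMod g, σ = Equiv.sumCongr (Equiv.addRight k) (Equiv.addRight k)) ∨
       (∃ k : ZMod g, σ = Equiv.sumCongr (Equiv.subLeft k) (Equiv.subLeft (k - 1)))) →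
      Equiv.Perm.sign σ = 1 := by
  have : NeZero g := ⟨by omega⟩
  have hcard : Odd (Fintype.card (ZMod g)) := by rwa [ZMod.card]
  rintro σ (⟨k, rfl⟩ | ⟨k, rfl⟩)
  · rw [sign_sumCongr, sign_addRight_of_odd_card hcard, one_mul]
  · rw [sign_sumCongr, sign_subLeft_of_odd_card hcard (k - 1) k, Int.units_mul_self]
end
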